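/- (Theorem 2, key inequality) Let t ≤ T−1 and suppose π_{s+1}⁺ ≤ π_s⁺ for all s ∈ {t,…,T−2}. Then for every ε ∈ (0, (T−t)·v̄], the expected value function satisfies V̄_t((T−t)·v̄ − ε) ≤ V̄_t((T−t)·v̄) + ε·π_t⁺, where V̄_t(y) := E[V_t(y, r_t, π_t)]. -/

import Mathlib

open MeasureTheory Set

/-- NEM X payment for net consumption `z` with buy price `pp` and sell price `pm`. -/
noncomputable def NEMPayment (pp pm z : ℝ) : ℝ := pp * max z 0 - pm * max (-z) 0

/-- The superdifferential of a function `f : ℝ → ℝ` (viewed as a concave function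
on `[0, ∞)`) at a point `y`. -/
def superdiff (f : ℝ → ℝ) (y : ℝ) : Set ℝ :=
  {s | ∀ z, 0 ≤ z → f z ≤ f y + s * (z - y)}

/-- Data of the EV-charging / flexible-consumption dynamic program over horizon
`{0, …, T-1}` with `K` flexible loads, under NEM time-of-use prices. -/
structure EVModel (K T : ℕ) (Ω : Type) [MeasurableSpace Ω] where
  /-- underlying probability measure -/
  μ : Measure Ω
  prob : IsProbabilityMeasure μ
  /-- consumption upper bounds -/
  dbar : Fin K → ℝ
  dbar_pos : ∀ i, 0 < dbar i
  /-- device utility functions -/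
  U : Fin K → ℝ → ℝ
  U_strictConcave : ∀ i, StrictConcaveOn ℝ (Icc 0 (dbar i)) (U i)
  U_strictMono : ∀ i, StrictMonoOn (U i) (Icc 0 (dbar i))
  U_diff : ∀ i, ∀ x ∈ Icc 0 (dbar i), DifferentiableWithinAt ℝ (U i) (Icc 0 (dbar i)) x
  U_contDeriv : ∀ i, ContinuousOn (fun x => derivWithin (U i) (Icc 0 (dbar i)) x) (Icc 0 (dbar i))
  U_zero : ∀ i, U i 0 = 0
  /-- renewable processes -/
  r : ℕ → Ω → ℝ
  r_meas : ∀ t, Measurable (r t)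
  r_nonneg : ∀ t ω, 0 ≤ r t ω
  r_int : ∀ t, Integrable (r t) μ
  r_indep : ProbabilityTheory.iIndepFun r μ
  /-- time-of-use buy prices `π_t⁺` -/
  pip : ℕ → ℝ
  /-- time-of-use sell prices `π_t⁻` -/
  pim : ℕ → ℝ
  /-- maximal per-period EV charge -/
  vbar : ℝ
  vbar_pos : 0 < vbar
  /-- per-unit penalty for unmet EV demand at the horizon -/
  γ : ℝ
  /-- `π_off⁻ = min_t π_t⁻` -/
  pioff : ℝ
  pioff_le : ∀ t < T, pioff ≤ pim t
  pioff_attained : ∃ t < T, pioff = pim t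
  /-- assumption A1 -/
  A1 : ∀ t < T, 0 < pim t ∧ pim t ≤ pip t ∧ pip t < γ

namespace EVModel

variable {K T : ℕ} {Ω : Type} [MeasurableSpace Ω]

/-- Stage reward `g_t(x_t, v, d)`. -/
noncomputable def stage (M : EVModel K T Ω) (t : ℕ) (rt v : ℝ) (d : Fin K → ℝ) : ℝ :=
  ∑ i, M.U i (d i) - NEMPayment (M.pip t) (M.pim t) (v + ∑ i, d i - rt)

/-- Feasible decisions `(v, d)` given remaining demand `y`. -/
def feas (M : EVModel K T Ω) (y : ℝ) : Set (ℝ × (Fin K → ℝ)) :=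
  {p | p.1 ∈ Icc 0 (min M.vbar y) ∧ ∀ i, p.2 i ∈ Icc 0 (M.dbar i)}

/-- Value function indexed by `k = T - 1 - t`, the number of remaining periods after
the current one. -/
noncomputable def W (M : EVModel K T Ω) : ℕ → ℝ → ℝ → ℝ
  | 0 => fun y rt => sSup ((fun p : ℝ × (Fin K → ℝ) =>
      M.stage (T - 1) rt p.1 p.2 - M.γ * (y - p.1)) '' M.feas y)
  | (k + 1) => fun y rt => sSup ((fun p : ℝ × (Fin K → ℝ) =>
      M.stage (T - 2 - k) rt p.1 p.2 +
        ∫ ω, M.W k (y - p.1) (M.r (T - 1 - k) ω) ∂M.μ) '' M.feas y)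

/-- Value function `V_t(y, r_t)` (the price argument is determined by `t`). -/
noncomputable def V (M : EVModel K T Ω) (t : ℕ) (y rt : ℝ) : ℝ := M.W (T - 1 - t) y rt

/-- Expected value function `V̄_t(y) = E[V_t(y, r_t, π_t)]`. -/
noncomputable def Vbar (M : EVModel K T Ω) (t : ℕ) (y : ℝ) : ℝ := ∫ ω, M.V t y (M.r t ω) ∂M.μ

/-- Objective of the Bellman equation at time `t` in state `(y, rt)`. -/
noncomputable def bellObj (M : EVModel K T Ω) (t : ℕ) (y rt : ℝ) (p : ℝ × (Fin K → ℝ)) : ℝ :=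
  if t = T - 1 then M.stage t rt p.1 p.2 - M.γ * (y - p.1)
  else M.stage t rt p.1 p.2 + ∫ ω, M.V (t + 1) (y - p.1) (M.r (t + 1) ω) ∂M.μ

/-- `(v, d)` is an optimal solution of the Bellman equation at time `t`. -/
def IsBellmanOpt (M : EVModel K T Ω) (t : ℕ) (y rt : ℝ) (p : ℝ × (Fin K → ℝ)) : Prop :=
  p ∈ M.feas y ∧ ∀ q ∈ M.feas y, M.bellObj t y rt q ≤ M.bellObj t y rt p

/-- Superdifferential `h_t` of the concave expected value function `V̄_t`. -/
noncomputable def h (M : EVModel K T Ω) (t : ℕ) (y : ℝ) : Set ℝ := superdiff (M.Vbar t) y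

end EVModel

/-!
Take a decision `(v, d)` feasible at demand `(T - t) v̄ - ε`. If `v + ε ≤ v̄`, charging `v + ε`
instead is feasible at demand `(T - t) v̄`, leads to the same next state and costs at most
`ε π_t⁺` more, because the NEM payment is convex piecewise linear with slopes `π_t⁻ ≤ π_t⁺`.
Otherwise charge at the full rate `v̄` now: this costs at most `(v̄ - v) π_t⁺` more, and the
remaining shortfall `ε - (v̄ - v) ≤ (T - t - 1) v̄` is handled by the same inequality at time
`t + 1`, at price `π_{t+1}⁺ ≤ π_t⁺`. Taking suprema and integrating over `r_t` gives the claim.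

The suprema are finite and the integrands integrable (so neither is a junk value) because the
Bellman objective at time `t` is bounded above by `a + γ |r|` and `V t y` is monotone in `r`.
-/

lemma NEMPayment_eq_max {pp pm : ℝ} (h : pm ≤ pp) (z : ℝ) :
    NEMPayment pp pm z = max (pp * z) (pm * z) := by
  unfold NEMPayment
  rcases le_total 0 z with hz | hz
  · rw [max_eq_left hz, max_eq_right (neg_nonpos_of_nonneg hz),
      max_eq_left (mul_le_mul_of_nonneg_right h hz)]
    ring
  · rw [max_eq_right hz, max_eq_left (neg_nonneg_of_nonpos hz),
      max_eq_right (mul_le_mul_of_nonpos_right h hz)]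
    ring

lemma NEMPayment_monotone {pp pm : ℝ} (hpm : 0 ≤ pm) (h : pm ≤ pp) :
    Monotone (NEMPayment pp pm) := by
  intro z z' hz
  simp only [NEMPayment_eq_max h]
  gcongr
  linarith

lemma NEMPayment_le_add {pp pm : ℝ} (h : pm ≤ pp) {z z' : ℝ} (hz : z ≤ z') :
    NEMPayment pp pm z' ≤ NEMPayment pp pm z + pp * (z' - z) := by
  simp only [NEMPayment_eq_max h]
  have : pm * (z' - z) ≤ pp * (z' - z) := mul_le_mul_of_nonneg_right h (by linarith)
  apply max_le <;> nlinarith [le_max_left (pp * z) (pm * z), le_max_right (pp * z) (pm * z)]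

lemma csSup_image_le_csSup_image_add {α : Type*} {s s' : Set α} {f g : α → ℝ} {c : ℝ}
    (hs : s.Nonempty) (hg : BddAbove (g '' s')) (h : ∀ p ∈ s, ∃ q ∈ s', f p ≤ g q + c) :
    sSup (f '' s) ≤ sSup (g '' s') + c := by
  refine csSup_le (hs.image f) ?_
  rintro _ ⟨p, hp, rfl⟩
  obtain ⟨q, hq, hpq⟩ := h p hp
  exact hpq.trans (by gcongr; exact le_csSup hg (mem_image_of_mem g hq))

lemma integral_le_integral_add_const {Ω : Type*} [MeasurableSpace Ω] {μ : Measure Ω}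
    [IsProbabilityMeasure μ] {f g : Ω → ℝ} {c : ℝ} (hf : Integrable f μ) (hg : Integrable g μ)
    (h : ∀ ω, f ω ≤ g ω + c) : ∫ ω, f ω ∂μ ≤ ∫ ω, g ω ∂μ + c := by
  calc ∫ ω, f ω ∂μ ≤ ∫ ω, (g ω + c) ∂μ := integral_mono hf (hg.add (integrable_const c)) h
    _ = ∫ ω, g ω ∂μ + c := by simp [integral_add hg (integrable_const c)]

namespace EVModel

variable {K T : ℕ} {Ω : Type} [MeasurableSpace Ω] (M : EVModel K T Ω) {t : ℕ}

lemma gamma_pos (ht : t < T) : 0 < M.γ := by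
  obtain ⟨hpm, hpmp, hpγ⟩ := M.A1 t ht
  linarith

lemma feas_nonempty {y : ℝ} (hy : 0 ≤ y) : (M.feas y).Nonempty :=
  ⟨(0, 0), ⟨le_rfl, le_min M.vbar_pos.le hy⟩, fun i => ⟨le_rfl, (M.dbar_pos i).le⟩⟩

lemma sum_U_le_sum_U_dbar {d : Fin K → ℝ} (hd : ∀ i, d i ∈ Icc 0 (M.dbar i)) :
    ∑ i, M.U i (d i) ≤ ∑ i, M.U i (M.dbar i) :=
  Finset.sum_le_sum fun i _ =>
    (M.U_strictMono i).monotoneOn (hd i) (right_mem_Icc.2 (M.dbar_pos i).le) (hd i).2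

lemma sum_U_dbar_nonneg : 0 ≤ ∑ i, M.U i (M.dbar i) := by
  simpa [M.U_zero] using M.sum_U_le_sum_U_dbar (d := 0) fun i => left_mem_Icc.2 (M.dbar_pos i).le

lemma stage_le (ht : t < T) {y : ℝ} {p : ℝ × (Fin K → ℝ)} (hp : p ∈ M.feas y) (r : ℝ) :
    M.stage t r p.1 p.2 ≤ ∑ i, M.U i (M.dbar i) + M.γ * |r| := by
  obtain ⟨hpm, hpmp, hpγ⟩ := M.A1 t ht
  have hload : 0 ≤ p.1 + ∑ i, p.2 i :=
    add_nonneg hp.1.1 (Finset.sum_nonneg fun i _ => (hp.2 i).1)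
  have hpay : M.pim t * (p.1 + ∑ i, p.2 i - r) ≤
      NEMPayment (M.pip t) (M.pim t) (p.1 + ∑ i, p.2 i - r) :=
    (NEMPayment_eq_max hpmp _).ge.trans' (le_max_right _ _)
  have hr : M.pim t * r ≤ M.γ * |r| :=
    (mul_le_mul_of_nonneg_left (le_abs_self r) hpm.le).trans
      (mul_le_mul_of_nonneg_right (hpmp.trans hpγ.le) (abs_nonneg r))
  have := M.sum_U_le_sum_U_dbar hp.2
  unfold stage
  nlinarith

lemma stage_mono_renewable (ht : t < T) (v : ℝ) (d : Fin K → ℝ) :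
    Monotone fun r => M.stage t r v d := by
  obtain ⟨hpm, hpmp, -⟩ := M.A1 t ht
  intro r r' hr
  have := NEMPayment_monotone hpm.le hpmp (show v + ∑ i, d i - r' ≤ v + ∑ i, d i - r by linarith)
  simp only [stage]
  linarith

lemma stage_le_stage_add (ht : t < T) {v v' : ℝ} (hv : v ≤ v') (r : ℝ) (d : Fin K → ℝ) :
    M.stage t r v d ≤ M.stage t r v' d + M.pip t * (v' - v) := by
  have := NEMPayment_le_add (M.A1 t ht).2.1
    (show v + ∑ i, d i - r ≤ v' + ∑ i, d i - r by linarith)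
  have e : v' + ∑ i, d i - r - (v + ∑ i, d i - r) = v' - v := by ring
  rw [e] at this
  simp only [stage]
  linarith

lemma bellObj_last (y r : ℝ) (p : ℝ × (Fin K → ℝ)) :
    M.bellObj (T - 1) y r p = M.stage (T - 1) r p.1 p.2 - M.γ * (y - p.1) :=
  if_pos rfl

lemma bellObj_of_succ_lt (h : t + 1 < T) (y r : ℝ) (p : ℝ × (Fin K → ℝ)) :
    M.bellObj t y r p =
      M.stage t r p.1 p.2 + ∫ ω, M.V (t + 1) (y - p.1) (M.r (t + 1) ω) ∂M.μ :=
  if_neg (by omega)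

lemma V_eq_sSup (ht : t < T) (y r : ℝ) : M.V t y r = sSup (M.bellObj t y r '' M.feas y) := by
  unfold V
  rcases hk : T - 1 - t with _ | k
  · obtain rfl : t = T - 1 := by omega
    simp only [W]
    congr 2 with p
    exact (M.bellObj_last y r p).symm
  · have h1 : t = T - 2 - k := by omega
    have h2 : T - 1 - k = t + 1 := by omega
    have h3 : T - 1 - (t + 1) = k := by omega
    simp only [W]
    congr 2 with p
    rw [M.bellObj_of_succ_lt (by omega), h2, ← h1]
    simp only [V, h3]

lemma bellObj_mono_renewable (ht : t < T) (y : ℝ) (p : ℝ × (Fin K → ℝ)) :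
    Monotone fun r => M.bellObj t y r p := by
  intro r r' hr
  have := M.stage_mono_renewable ht p.1 p.2 hr
  simp only [bellObj]
  split_ifs <;> linarith

/- `0 ≤ a` is needed for `y < 0`, where `feas y = ∅` and `V t y r = sSup ∅ = 0`. -/
def HasGrowthBound (t : ℕ) (a : ℝ) : Prop :=
  0 ≤ a ∧ ∀ y r, ∀ p ∈ M.feas y, M.bellObj t y r p ≤ a + M.γ * |r|

namespace HasGrowthBound

variable {M} {a : ℝ} (h : M.HasGrowthBound t a)
include h

lemma bddAbove (y r : ℝ) : BddAbove (M.bellObj t y r '' M.feas y) :=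
  ⟨a + M.γ * |r|, by rintro _ ⟨p, hp, rfl⟩; exact h.2 y r p hp⟩

lemma V_le (ht : t < T) (y r : ℝ) : M.V t y r ≤ a + M.γ * |r| := by
  rw [M.V_eq_sSup ht]
  exact Real.sSup_le (by rintro _ ⟨p, hp, rfl⟩; exact h.2 y r p hp)
    (add_nonneg h.1 (mul_nonneg (M.gamma_pos ht).le (abs_nonneg r)))

lemma V_monotone (ht : t < T) (y : ℝ) : Monotone (M.V t y) := by
  intro r r' hr
  rw [M.V_eq_sSup ht, M.V_eq_sSup ht]
  rcases (M.feas y).eq_empty_or_nonempty with hempty | hne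
  · simp [hempty]
  · simpa using csSup_image_le_csSup_image_add (c := 0) hne (h.bddAbove y r')
      fun p hp => ⟨p, hp, by simpa using M.bellObj_mono_renewable ht y p hr⟩

lemma integrable (ht : t < T) (s : ℕ) (y : ℝ) :
    Integrable (fun ω => M.V t y (M.r s ω)) M.μ := by
  have := M.prob
  exact integrable_of_le_of_le
    ((h.V_monotone ht y).measurable.comp (M.r_meas s)).aestronglyMeasurable
    (ae_of_all _ fun ω => h.V_monotone ht y (M.r_nonneg s ω))
    (ae_of_all _ fun ω => h.V_le ht y (M.r s ω))
    (integrable_const _) ((integrable_const a).add ((M.r_int s).abs.const_mul M.γ))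

end HasGrowthBound

lemma exists_hasGrowthBound (ht : t < T) : ∃ a, M.HasGrowthBound t a := by
  have := M.prob
  have hU := M.sum_U_dbar_nonneg
  have hγ := M.gamma_pos ht
  have hT : 0 < T := by omega
  have htT : t ≤ T - 1 := by omega
  clear ht
  induction htT using Nat.decreasingInduction with
  | self =>
    refine ⟨_, hU, fun y r p hp => ?_⟩
    have hv : 0 ≤ y - p.1 := by linarith [hp.1.2.trans (min_le_right _ _)]
    rw [M.bellObj_last]
    nlinarith [M.stage_le (t := T - 1) (by omega) hp r]
  | of_succ t htT ih =>
    obtain ⟨a, ha⟩ := ih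
    have hE : 0 ≤ ∫ ω, |M.r (t + 1) ω| ∂M.μ := integral_nonneg fun ω => abs_nonneg _
    refine ⟨_, add_nonneg hU (add_nonneg ha.1 (mul_nonneg hγ.le hE)), fun y r p hp => ?_⟩
    have hcont : ∫ ω, M.V (t + 1) (y - p.1) (M.r (t + 1) ω) ∂M.μ ≤
        a + M.γ * ∫ ω, |M.r (t + 1) ω| ∂M.μ := by
      calc _ ≤ ∫ ω, (a + M.γ * |M.r (t + 1) ω|) ∂M.μ :=
            integral_mono (ha.integrable (by omega) _ _)
              ((integrable_const a).add ((M.r_int _).abs.const_mul M.γ))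
              fun ω => ha.V_le (by omega) _ _
        _ = a + M.γ * ∫ ω, |M.r (t + 1) ω| ∂M.μ := by
            rw [integral_add (integrable_const a) ((M.r_int _).abs.const_mul M.γ),
              integral_const_mul]
            simp
    rw [M.bellObj_of_succ_lt (by omega)]
    linarith [M.stage_le (t := t) (by omega) hp r]

lemma bddAbove_bellObj (ht : t < T) (y r : ℝ) : BddAbove (M.bellObj t y r '' M.feas y) :=
  (M.exists_hasGrowthBound ht).choose_spec.bddAbove y r

lemma integrable_V (ht : t < T) (s : ℕ) (y : ℝ) :
    Integrable (fun ω => M.V t y (M.r s ω)) M.μ :=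
  (M.exists_hasGrowthBound ht).choose_spec.integrable ht s y

lemma V_le_V_add_of_forall_exists (ht : t < T) {y y' r c : ℝ} (hy : 0 ≤ y)
    (h : ∀ p ∈ M.feas y, ∃ q ∈ M.feas y', M.bellObj t y r p ≤ M.bellObj t y' r q + c) :
    M.V t y r ≤ M.V t y' r + c := by
  rw [M.V_eq_sSup ht, M.V_eq_sSup ht]
  exact csSup_image_le_csSup_image_add (M.feas_nonempty hy) (M.bddAbove_bellObj ht y' r) h

lemma bellObj_sub_le_shift (ht : t < T) {ε : ℝ} (hε : 0 ≤ ε) (y r : ℝ)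
    (p : ℝ × (Fin K → ℝ)) :
    M.bellObj t (y - ε) r p ≤ M.bellObj t y r (p.1 + ε, p.2) + ε * M.pip t := by
  have := M.stage_le_stage_add ht (le_add_of_nonneg_right hε : p.1 ≤ p.1 + ε) r p.2
  rw [add_sub_cancel_left] at this
  have e : y - ε - p.1 = y - (p.1 + ε) := by ring
  simp only [bellObj, e]
  split_ifs <;> linarith

lemma bellObj_sub_le_vbar (h : t + 1 < T) (hprice : M.pip (t + 1) ≤ M.pip t) {y ε r : ℝ}
    {p : ℝ × (Fin K → ℝ)} (hv : p.1 ≤ M.vbar) (hε : M.vbar - p.1 ≤ ε)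
    (hnext : ∀ r', M.V (t + 1) (y - ε - p.1) r' ≤
      M.V (t + 1) (y - M.vbar) r' + (ε - (M.vbar - p.1)) * M.pip (t + 1)) :
    M.bellObj t (y - ε) r p ≤ M.bellObj t y r (M.vbar, p.2) + ε * M.pip t := by
  have := M.prob
  have hcont := integral_le_integral_add_const (M.integrable_V h _ _) (M.integrable_V h _ _)
    fun ω => hnext (M.r (t + 1) ω)
  have hstage := M.stage_le_stage_add (t := t) (by omega) hv r p.2
  have hpip := mul_le_mul_of_nonneg_left hprice (sub_nonneg.2 hε)
  rw [M.bellObj_of_succ_lt h, M.bellObj_of_succ_lt h]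
  dsimp only
  linarith

lemma V_sub_le_step (ht : t < T) {ε : ℝ} (hε0 : 0 ≤ ε)
    (hε : ε ≤ ((T - t : ℕ) : ℝ) * M.vbar)
    (hnext : t + 1 < T → M.pip (t + 1) ≤ M.pip t ∧
      ∀ δ, 0 ≤ δ → δ ≤ ((T - (t + 1) : ℕ) : ℝ) * M.vbar → ∀ r,
        M.V (t + 1) (((T - (t + 1) : ℕ) : ℝ) * M.vbar - δ) r ≤
          M.V (t + 1) (((T - (t + 1) : ℕ) : ℝ) * M.vbar) r + δ * M.pip (t + 1))
    (r : ℝ) :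
    M.V t (((T - t : ℕ) : ℝ) * M.vbar - ε) r ≤
      M.V t (((T - t : ℕ) : ℝ) * M.vbar) r + ε * M.pip t := by
  refine M.V_le_V_add_of_forall_exists ht (by linarith) fun p hp => ?_
  have hv0 : 0 ≤ p.1 := hp.1.1
  have hv : p.1 ≤ M.vbar := hp.1.2.trans (min_le_left _ _)
  have hvy : p.1 ≤ ((T - t : ℕ) : ℝ) * M.vbar - ε := hp.1.2.trans (min_le_right _ _)
  by_cases hshift : p.1 + ε ≤ M.vbar
  · exact ⟨(p.1 + ε, p.2), ⟨⟨by linarith, le_min hshift (by linarith)⟩, hp.2⟩,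
      M.bellObj_sub_le_shift ht hε0 _ r p⟩
  have hsucc : t + 1 < T := by
    by_contra hlast
    rw [show T - t = 1 by omega, Nat.cast_one, one_mul] at hvy
    exact hshift (by linarith)
  have hY : ((T - t : ℕ) : ℝ) * M.vbar = ((T - (t + 1) : ℕ) : ℝ) * M.vbar + M.vbar := by
    rw [show T - t = T - (t + 1) + 1 by omega]
    push_cast
    ring
  have hY' : 0 ≤ ((T - (t + 1) : ℕ) : ℝ) * M.vbar := by have := M.vbar_pos; positivity
  obtain ⟨hprice, hV⟩ := hnext hsucc
  refine ⟨(M.vbar, p.2), ⟨⟨M.vbar_pos.le, le_min le_rfl (by linarith)⟩, hp.2⟩,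
    M.bellObj_sub_le_vbar hsucc hprice hv (by linarith) fun r' => ?_⟩
  rw [hY, show ((T - (t + 1) : ℕ) : ℝ) * M.vbar + M.vbar - ε - p.1 =
    ((T - (t + 1) : ℕ) : ℝ) * M.vbar - (ε - (M.vbar - p.1)) by ring, add_sub_cancel_right]
  exact hV _ (by linarith) (by linarith) r'

theorem V_sub_le (hprice : ∀ s, t ≤ s → s ≤ T - 2 → M.pip (s + 1) ≤ M.pip s) (ht : t < T)
    {ε : ℝ} (hε0 : 0 ≤ ε) (hε : ε ≤ ((T - t : ℕ) : ℝ) * M.vbar) (r : ℝ) :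
    M.V t (((T - t : ℕ) : ℝ) * M.vbar - ε) r ≤
      M.V t (((T - t : ℕ) : ℝ) * M.vbar) r + ε * M.pip t := by
  have hT : 0 < T := by omega
  have htT : t ≤ T - 1 := by omega
  clear ht
  induction htT using Nat.decreasingInduction generalizing ε r with
  | self => exact M.V_sub_le_step (by omega) hε0 hε (fun h => absurd h (by omega)) r
  | of_succ t htT ih =>
    refine M.V_sub_le_step (by omega) hε0 hε (fun _ => ⟨hprice t le_rfl (by omega), ?_⟩) r
    exact fun δ hδ0 hδ r' => ih (fun s hs => hprice s (by omega)) hδ0 hδ r'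

end EVModel

theorem thm2_key_inequality_general (K T : ℕ) (Ω : Type) [MeasurableSpace Ω]
    (M : EVModel K T Ω) (t : ℕ)
    (hprice : ∀ s, t ≤ s → s ≤ T - 2 → M.pip (s + 1) ≤ M.pip s)
    (ε : ℝ) (hε : 0 < ε) (hε' : ε ≤ ((T - t : ℕ) : ℝ) * M.vbar) :
    M.Vbar t (((T - t : ℕ) : ℝ) * M.vbar - ε) ≤
      M.Vbar t (((T - t : ℕ) : ℝ) * M.vbar) + ε * M.pip t := by
  have ht : t < T := by
    by_contra h
    rw [Nat.sub_eq_zero_of_le (not_lt.1 h), Nat.cast_zero, zero_mul] at hε'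
    linarith
  have := M.prob
  exact integral_le_integral_add_const (M.integrable_V ht t _) (M.integrable_V ht t _)
    fun ω => M.V_sub_le hprice ht hε.le hε' (M.r t ω)

/-- **Theorem 2 (key inequality).**
Let `t ≤ T - 1` and suppose `π_{s+1}⁺ ≤ π_s⁺` for all `s ∈ {t, …, T-2}`.  Then for
every `ε ∈ (0, (T - t) v̄]`, the expected value function satisfies
`V̄_t((T - t) v̄ - ε) ≤ V̄_t((T - t) v̄) + ε π_t⁺`. -/
theorem thm2_key_inequality (K T : ℕ) (Ω : Type) [MeasurableSpace Ω]
    (M : EVModel K T Ω) (t : ℕ) (ht : t < T)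
    (hprice : ∀ s, t ≤ s → s ≤ T - 2 → M.pip (s + 1) ≤ M.pip s)
    (ε : ℝ) (hε : 0 < ε) (hε' : ε ≤ ((T - t : ℕ) : ℝ) * M.vbar) :
    M.Vbar t (((T - t : ℕ) : ℝ) * M.vbar - ε) ≤
      M.Vbar t (((T - t : ℕ) : ℝ) * M.vbar) + ε * M.pip t :=
  thm2_key_inequality_general K T Ω M t hprice ε hε hε'
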